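/- Let H be a complex inner product space, n a natural number, u, v : Fin n → H families of vectors, and z ∈ ℂ with Im z ≠ 0. Define the n×n complex matrix K by K_{ij} := ⟨u_i, u_j⟩ + conj(z)·⟨v_i, v_j⟩ (inner product conjugate-linear in the first slot). Then for every ξ ∈ ℂⁿ, the number (Σ_{i,j} conj(ξ_i)(K_{ij} − conj(K_{ji}))ξ_j)/(z − conj(z)) is real and nonpositive; that is, (K − K*)/(z − z̄) is Hermitian negative semidefinite. -/

import Mathlib

/-! The Hermitian part `⟨u i, u j⟩` of `K` cancels in `K - Kᴴ`, leaving `(z̄ - z)` times the Gram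
matrix of `v`. The Gram matrix is positive semidefinite, so after division by `z - z̄` the
quadratic form is `-‖∑ ξ i • v i‖²`. -/

open ComplexConjugate Matrix

open scoped ComplexOrder

theorem Matrix.sum_sum_star_mul_mul_eq_star_dotProduct_mulVec {ι R : Type*} [Fintype ι]
    [NonUnitalSemiring R] [StarRing R] (M : Matrix ι ι R) (x y : ι → R) :
    ∑ i, ∑ j, star (x i) * M i j * y j = star x ⬝ᵥ M *ᵥ y := by
  simp only [dotProduct, mulVec, Finset.mul_sum, Pi.star_apply, mul_assoc]

theorem Matrix.IsHermitian.add_smul_sub_conjTranspose {ι R : Type*} [CommRing R] [StarRing R]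
    {A B : Matrix ι ι R} (hA : A.IsHermitian) (hB : B.IsHermitian) (c : R) :
    A + c • B - (A + c • B)ᴴ = (c - star c) • B := by
  rw [conjTranspose_add, conjTranspose_smul, hA.eq, hB.eq, sub_smul]
  abel

/-- for families `u, v` in a complex inner product space and `z` with
`Im z ≠ 0`, the matrix `K i j = ⟨u i, u j⟩ + conj z ⟨v i, v j⟩` satisfies that
`(K − K*)/(z − z̄)` is Hermitian negative semidefinite: for every `ξ ∈ ℂⁿ` the number
`(Σ_{i,j} conj (ξ i) (K i j − conj (K j i)) ξ j)/(z − conj z)` is real and nonpositive. -/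
theorem perm_matrix_imag_part_negsemidef {H : Type*} [NormedAddCommGroup H]
    [InnerProductSpace ℂ H] (n : ℕ) (u v : Fin n → H) (z : ℂ) (hz : z.im ≠ 0)
    (K : Matrix (Fin n) (Fin n) ℂ)
    (hK : ∀ i j, K i j = (inner ℂ (u i) (u j) : ℂ) + conj z * (inner ℂ (v i) (v j) : ℂ)) :
    ∀ ξ : Fin n → ℂ,
      ((∑ i, ∑ j, conj (ξ i) * (K i j - conj (K j i)) * ξ j) / (z - conj z)).im = 0 ∧
      ((∑ i, ∑ j, conj (ξ i) * (K i j - conj (K j i)) * ξ j) / (z - conj z)).re ≤ 0 := by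
  intro ξ
  have hK_gram : K = gram ℂ u + conj z • gram ℂ v := by
    ext i j
    simp [hK]
  have hz' : z - conj z ≠ 0 := by
    simpa [Complex.sub_conj, Complex.I_ne_zero] using hz
  have hq : 0 ≤ star ξ ⬝ᵥ gram ℂ v *ᵥ ξ := (posSemidef_gram ℂ v).dotProduct_mulVec_nonneg ξ
  have hsum : ∑ i, ∑ j, conj (ξ i) * (K i j - conj (K j i)) * ξ j
      = -(z - conj z) * (star ξ ⬝ᵥ gram ℂ v *ᵥ ξ) :=
    calc ∑ i, ∑ j, conj (ξ i) * (K i j - conj (K j i)) * ξ j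
        = star ξ ⬝ᵥ (K - Kᴴ) *ᵥ ξ := sum_sum_star_mul_mul_eq_star_dotProduct_mulVec _ _ _
      _ = star ξ ⬝ᵥ ((conj z - z) • gram ℂ v) *ᵥ ξ := by
        rw [hK_gram, (isHermitian_gram ℂ u).add_smul_sub_conjTranspose (isHermitian_gram ℂ v),
          Complex.star_def, Complex.conj_conj]
      _ = -(z - conj z) * (star ξ ⬝ᵥ gram ℂ v *ᵥ ξ) := by
        rw [smul_mulVec, dotProduct_smul, smul_eq_mul, neg_sub]
  rw [hsum, neg_mul, neg_div, mul_div_cancel_left₀ _ hz']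
  obtain ⟨hre, him⟩ := Complex.nonneg_iff.mp hq
  simp [← him, hre]
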